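/- K ⊨_l ¬enc(P) ∨ enc(P') over all finite paths of K if and only if K_ι ⊨_l ¬enc_ι(P) ∨ enc_ι(P') over all infinite paths of K_ι. -/

import Mathlib

set_option autoImplicit true

section IFCIL

variable {N O S A Pr : Type}

/-- Node patterns: a concrete node or the wildcard `*`. -/
inductive NodePat (N : Type) where
  | star : NodePat N
  | node : N → NodePat N

/-- An arc of an information flow diagram: source, nonempty set of operations, target. -/
abbrev Arc (N O : Type) := N × Set O × N

/-- An information flow diagram `I = (N, ta, E)`. -/
structure IFD (N O : Type) where
  ta : N → Set N
  E : Set (Arc N O)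

/-- A node pattern `m` matches a node `n`: `m = *` or `n ∈ ta(m)`. -/
def NodePat.mat (I : IFD N O) : NodePat N → N → Prop
  | .star, _ => True
  | .node m, n => n ∈ I.ta m

/-- Consecutive arcs have matching endpoints. -/
def Chained : List (Arc N O) → Prop
  | [] => True
  | [_] => True
  | a :: b :: rest => a.2.2 = b.1 ∧ Chained (b :: rest)

/-- A path in `I`: nonempty, chained sequence of arcs of `I`. -/
def PathIn (I : IFD N O) (π : List (Arc N O)) : Prop :=
  π ≠ [] ∧ Chained π ∧ ∀ a ∈ π, a ∈ I.E

/-- Arrows: single step `>` or multi step `+>`. -/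
inductive Arrow where
  | single : Arrow
  | multi : Arrow

/-- Path kinds `P ::= n [o]> n' | n +[o]> n' | P₁ P₂`. -/
inductive Kind (N O : Type) where
  | atom : NodePat N → Arrow → Set O → NodePat N → Kind N O
  | comp : Kind N O → Kind N O → Kind N O

/-- The kind satisfaction relation `π ▷_I P`. -/
inductive KSat (I : IFD N O) : List (Arc N O) → Kind N O → Prop where
  | step : NodePat.mat I m n → NodePat.mat I m' n' → (o ∩ o').Nonempty →
      KSat I [(n, o, n')] (.atom m .single o' m')
  | plusBase : KSat I [(n, o, n')] (.atom m .single o' m') →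
      KSat I [(n, o, n')] (.atom m .multi o' m')
  | plusStep : KSat I [(n, o, n')] (.atom m .single o' .star) →
      KSat I π (.atom .star .multi o' m') →
      KSat I ((n, o, n') :: π) (.atom m .multi o' m')
  | comp : KSat I π₁ P₁ → KSat I π₂ P₂ → KSat I (π₁ ++ π₂) (.comp P₁ P₂)

/-- Node refinement: `n ⪯_n n` and `n ⪯_n *`. -/
def NRef : NodePat N → NodePat N → Prop := fun a b => a = b ∨ b = .star

/-- Arrow refinement: reflexivity and `> ⪯_a +>`. -/
inductive ARef : Arrow → Arrow → Prop where
  | refl (a) : ARef a a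
  | up : ARef .single .multi

/-- Kind refinement `⪯_P`: rules (comp), (P-1)–(P-4), closed under reflexivity
and transitivity. -/
inductive KRef : Kind N O → Kind N O → Prop where
  | refl (P) : KRef P P
  | trans : KRef P Q → KRef Q R → KRef P R
  | comp : KRef P₁ P₁' → KRef P₂ P₂' → KRef (.comp P₁ P₂) (.comp P₁' P₂')
  | atom : NRef n₁ n₁' → NRef n₂ n₂' → ARef w w' → o ⊆ o' →
      KRef (.atom n₁ w o n₂) (.atom n₁' w' o' n₂')
  | p2 : NRef n₁ n₁' → NRef n₂ n₂' → o₁ ⊆ o₁' → o₁ ⊆ o₂' → o₂ ⊆ o₂' →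
      KRef (.comp (.atom n₁ .multi o₁ .star) (.atom .star .single o₂ n₂))
           (.comp (.atom n₁' .single o₁' .star) (.atom .star .multi o₂' n₂'))
  | p3 : NRef n₁ n₁' → NRef n₂ n₂' → o₁ ⊆ o' → o₂ ⊆ o' →
      KRef (.comp (.atom n₁ .multi o₁ .star) (.atom .star .multi o₂ n₂))
           (.atom n₁' .multi o' n₂')
  | p4 : NRef n₁ n₁' → NRef n₂ n₂' → o₁ ⊆ o₁' → o₂ ⊆ o₂' → o₂ ⊆ o₁' →
      KRef (.comp (.atom n₁ .single o₁ .star) (.atom .star .multi o₂ n₂))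
           (.comp (.atom n₁' .multi o₁' .star) (.atom .star .single o₂' n₂'))

/-- IFL requirements `R ::= P | ~P | P : P'`. -/
inductive Req (N O : Type) where
  | ex : Kind N O → Req N O
  | no : Kind N O → Req N O
  | constr : Kind N O → Kind N O → Req N O

/-- Validity `I ⊨ R`. -/
def Valid (I : IFD N O) : Req N O → Prop
  | .ex P => ∃ π, PathIn I π ∧ KSat I π P
  | .no P => ¬ ∃ π, PathIn I π ∧ KSat I π P
  | .constr P P' => ∀ π, PathIn I π → KSat I π P → KSat I π P'

/-- Requirement refinement `⪯`: rules (R-1)–(R-3), closed under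
reflexivity and transitivity. -/
inductive RRef : Req N O → Req N O → Prop where
  | refl (R) : RRef R R
  | trans : RRef R₁ R₂ → RRef R₂ R₃ → RRef R₁ R₃
  | ex : KRef P P' → RRef (.ex P) (.ex P')
  | no : KRef P P' → RRef (.no P') (.no P)
  | constr : KRef P₁ P₁' → KRef P₂ P₂' → RRef (.constr P₁' P₂) (.constr P₁ P₂')

/-- The equivalent, right-linear grammar of kinds:
`P ::= n [o]> n' | n +[o]> n' | (n [o]> n') P | (n +[o]> n') P`. -/
inductive LKind (N O : Type) where
  | step : NodePat N → Set O → NodePat N → LKind N O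
  | plus : NodePat N → Set O → NodePat N → LKind N O
  | stepC : NodePat N → Set O → NodePat N → LKind N O → LKind N O
  | plusC : NodePat N → Set O → NodePat N → LKind N O → LKind N O

/-- Kind satisfaction `π ▷_I P` for the right-linear grammar. -/
inductive LSat (I : IFD N O) : List (Arc N O) → LKind N O → Prop where
  | step : NodePat.mat I m n → NodePat.mat I m' n' → (o ∩ o').Nonempty →
      LSat I [(n, o, n')] (.step m o' m')
  | plusBase : LSat I [(n, o, n')] (.step m o' m') →
      LSat I [(n, o, n')] (.plus m o' m')
  | plusStep : LSat I [(n, o, n')] (.step m o' .star) →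
      LSat I π (.plus .star o' m') →
      LSat I ((n, o, n') :: π) (.plus m o' m')
  | stepC : LSat I [(n, o, n')] (.step m o' .star) → LSat I π P →
      LSat I ((n, o, n') :: π) (.stepC m o' m' P)
  | plusCBase : LSat I π (.stepC m o' m' P) → LSat I π (.plusC m o' m' P)
  | plusCStep : LSat I [(n, o, n')] (.step m o' .star) →
      LSat I π (.plusC .star o' .star P) →
      LSat I ((n, o, n') :: π) (.plusC m o' m' P)

/-- LTL formulas over atomic propositions `Pr` and actions `A`;
`acts o` stands for the disjunction `⋁_{op ∈ o} (op)`. -/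
inductive LTL (Pr A : Type) where
  | tt : LTL Pr A
  | atom : Pr → LTL Pr A
  | acts : Set A → LTL Pr A
  | and : LTL Pr A → LTL Pr A → LTL Pr A
  | or : LTL Pr A → LTL Pr A → LTL Pr A
  | not : LTL Pr A → LTL Pr A
  | next : LTL Pr A → LTL Pr A
  | untl : LTL Pr A → LTL Pr A → LTL Pr A

/-- A finite KTS path: a state followed by a list of (action, state) steps. -/
structure FinPath (S A : Type) where
  first : S
  rest : List (A × S)

/-- Drop the first `k` transitions of a finite path. -/
def FinPath.drop : FinPath S A → ℕ → FinPath S A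
  | w, 0 => w
  | ⟨s, []⟩, _ + 1 => ⟨s, []⟩
  | ⟨_, (_, s') :: r⟩, k + 1 => FinPath.drop ⟨s', r⟩ k

/-- Finite-path LTL semantics `w ⊨_l φ` with labeling `L`. -/
def FSat (L : S → Set Pr) : LTL Pr A → FinPath S A → Prop
  | .tt, _ => True
  | .atom p, w => p ∈ L w.first
  | .acts o, w => ∃ a s r, w.rest = (a, s) :: r ∧ a ∈ o
  | .and φ ψ, w => FSat L φ w ∧ FSat L ψ w
  | .or φ ψ, w => FSat L φ w ∨ FSat L ψ w
  | .not φ, w => ¬ FSat L φ w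
  | .next φ, w => ∃ a s r, w.rest = (a, s) :: r ∧ FSat L φ ⟨s, r⟩
  | .untl φ ψ, w => ∃ k, k ≤ w.rest.length ∧ FSat L ψ (w.drop k) ∧
      ∀ j < k, FSat L φ (w.drop j)

/-- The LTL encoding `enc(P)` of flow kinds (finite-path version,
with end marker `¬X(true)`). -/
def encK : LKind N O → LTL (NodePat N) O
  | .step n o n' =>
      .and (.atom n) (.and (.acts o) (.next (.and (.atom n') (.not (.next .tt)))))
  | .plus n o n' =>
      .and (.atom n) (.and (.acts o)
        (.next (.untl (.acts o) (.and (.atom n') (.not (.next .tt))))))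
  | .stepC n o _ P => .and (.atom n) (.and (.acts o) (.next (encK P)))
  | .plusC n o _ P =>
      .and (.atom n) (.and (.acts o) (.next (.untl (.acts o) (encK P))))

/-- The labeling `Λ` of the KTS of `I`: `M ∈ Λ(n)` iff `n ∈ ta(M)`
(with the wildcard true everywhere). -/
def labelOf (I : IFD N O) : N → Set (NodePat N) :=
  fun n => {p | NodePat.mat I p n}

/-- `encRest π r`: the steps `r` traverse the arcs `π` choosing one
operation from each arc's operation set. -/
def encRest : List (Arc N O) → List (O × N) → Prop
  | [], [] => True
  | (_, o, n') :: π, (op, s) :: r => op ∈ o ∧ s = n' ∧ encRest π r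
  | _, _ => False

/-- `w ∈ enc(π)` : the KTS path `w` results from the diagram path `π`
by choosing one operation from each arc's operation set. -/
def encPath (π : List (Arc N O)) (w : FinPath N O) : Prop :=
  match π with
  | [] => False
  | (n, _, _) :: _ => w.first = n ∧ encRest π w.rest

/-- Auxiliary for `π_w`. -/
def diagOf : N → List (O × N) → List (Arc N O)
  | _, [] => []
  | s, (op, s') :: r => (s, ({op} : Set O), s') :: diagOf s' r

/-- `π_w`: the diagram path obtained from a KTS path by replacing each
action `op` with the singleton `{op}`. -/
def FinPath.toDiagram (w : FinPath N O) : List (Arc N O) := diagOf w.first w.rest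

/-- A transition of the KTS of `I`: `E' = {(n, op, n') | (n,o,n') ∈ E, op ∈ o}`. -/
def ktsStep (I : IFD N O) (s : N) (op : O) (s' : N) : Prop :=
  ∃ o, (s, o, s') ∈ I.E ∧ op ∈ o

def ktsRest (I : IFD N O) : N → List (O × N) → Prop
  | _, [] => True
  | s, (op, s') :: r => ktsStep I s op s' ∧ ktsRest I s' r

/-- `w` is a (finite) path of the KTS of `I`. -/
def KTSPath (I : IFD N O) (w : FinPath N O) : Prop := ktsRest I w.first w.rest

/-- `K ⊨_l φ`: every finite path of the KTS of `I` satisfies `φ`. -/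
def KModels (I : IFD N O) (φ : LTL (NodePat N) O) : Prop :=
  ∀ w, KTSPath I w → FSat (labelOf I) φ w

/-- IFL requirements over right-linear kinds. -/
inductive LReq (N O : Type) where
  | ex : LKind N O → LReq N O
  | no : LKind N O → LReq N O
  | constr : LKind N O → LKind N O → LReq N O

/-- Validity `I ⊨ R` for right-linear requirements. -/
def LValid (I : IFD N O) : LReq N O → Prop
  | .ex P => ∃ π, PathIn I π ∧ LSat I π P
  | .no P => ¬ ∃ π, PathIn I π ∧ LSat I π P
  | .constr P P' => ∀ π, PathIn I π → LSat I π P → LSat I π P'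

/-- Satisfaction `K ⊢ R` in the finite-path KTS semantics. -/
def KEnt (I : IFD N O) : LReq N O → Prop
  | .ex P => ¬ KModels I (.not (encK P))
  | .no P => KModels I (.not (encK P))
  | .constr P P' => KModels I (.or (.not (encK P)) (encK P'))

/-- Infinite KTS paths. -/
structure InfPath (S A : Type) where
  state : ℕ → S
  act : ℕ → A

def InfPath.drop (w : InfPath S A) (k : ℕ) : InfPath S A :=
  ⟨fun i => w.state (i + k), fun i => w.act (i + k)⟩

/-- Infinite-path LTL semantics. -/
def ISat (L : S → Set Pr) : LTL Pr A → InfPath S A → Prop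
  | .tt, _ => True
  | .atom p, w => p ∈ L (w.state 0)
  | .acts o, w => w.act 0 ∈ o
  | .and φ ψ, w => ISat L φ w ∧ ISat L ψ w
  | .or φ ψ, w => ISat L φ w ∨ ISat L ψ w
  | .not φ, w => ¬ ISat L φ w
  | .next φ, w => ISat L φ (w.drop 1)
  | .untl φ ψ, w => ∃ k, ISat L ψ (w.drop k) ∧ ∀ j < k, ISat L φ (w.drop j)

/-- Atomic propositions for the sink-extended KTS: node patterns plus
the distinguished proposition `ι`. -/
abbrev SProp (N : Type) := NodePat N ⊕ Unit

/-- Labeling of the sink-extended KTS: the sink (`none`) is labeled only by `ι`. -/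
def labelι (I : IFD N O) : Option N → Set (SProp N)
  | some n => {p | ∃ q, p = Sum.inl q ∧ NodePat.mat I q n}
  | none => {Sum.inr ()}

/-- The encoding `enc_ι(P)` of flow kinds for the sink-extended KTS:
identical to `enc` except that `¬X(true)` is replaced by `X(ι)`. -/
def encι : LKind N O → LTL (SProp N) O
  | .step n o n' =>
      .and (.atom (.inl n)) (.and (.acts o)
        (.next (.and (.atom (.inl n')) (.next (.atom (.inr ()))))))
  | .plus n o n' =>
      .and (.atom (.inl n)) (.and (.acts o)
        (.next (.untl (.acts o) (.and (.atom (.inl n')) (.next (.atom (.inr ())))))))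
  | .stepC n o _ P => .and (.atom (.inl n)) (.and (.acts o) (.next (encι P)))
  | .plusC n o _ P =>
      .and (.atom (.inl n)) (.and (.acts o) (.next (.untl (.acts o) (encι P))))

/-- The states of a finite path. -/
def FinPath.states (w : FinPath S A) : List S := w.first :: w.rest.map Prod.snd

/-- `w·ι^ω`: the finite path `w` followed by the sink forever
(with arbitrary operation labels `ops` into `ι`). -/
def appendSink (w : FinPath N O) (ops : ℕ → O) : InfPath (Option N) O where
  state := fun i => w.states[i]?
  act := fun i => if h : i < w.rest.length then (w.rest.get ⟨i, h⟩).1 else ops i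

/-- Transitions of the sink-extended KTS `K_ι`: the transitions of `K`,
transitions from every state to the sink with every operation, and the
self-loop on the sink. -/
def sinkStep (I : IFD N O) : Option N → O → Option N → Prop
  | some s, op, some s' => ktsStep I s op s'
  | _, _, none => True
  | none, _, some _ => False

/-- `w` is an infinite path of the sink-extended KTS `K_ι`. -/
def KιPath (I : IFD N O) (w : InfPath (Option N) O) : Prop :=
  ∀ i, sinkStep I (w.state i) (w.act i) (w.state (i + 1))

/-- `K_ι ⊨_l φ`: every infinite path of `K_ι` satisfies `φ`. -/
def KιModels (I : IFD N O) (φ : LTL (SProp N) O) : Prop :=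
  ∀ w, KιPath I w → ISat (labelι I) φ w

/-- Satisfaction `K_ι ⊢ R` in the infinite-path, sink-extended semantics. -/
def KιEnt (I : IFD N O) : LReq N O → Prop
  | .ex P => ¬ KιModels I (.not (encι P))
  | .no P => KιModels I (.not (encι P))
  | .constr P P' => KιModels I (.or (.not (encι P)) (encι P'))

/-- The leading node constraint of a kind. -/
def LKind.firstNode : LKind N O → NodePat N
  | .step n _ _ => n
  | .plus n _ _ => n
  | .stepC n _ _ _ => n
  | .plusC n _ _ _ => n

/-- The leading operation set of a kind. -/
def LKind.firstOps : LKind N O → Set O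
  | .step _ o _ => o
  | .plus _ o _ => o
  | .stepC _ o _ _ => o
  | .plusC _ o _ _ => o

end IFCIL

/-!
Appending the sink to a finite `K`-path `w` gives a `K_ι`-path `w·ι^ω`, and conversely every
`K_ι`-path satisfying `enc_ι(P)` starts in `K` and eventually enters the sink, which absorbs it,
so it has the form `w·ι^ω`. Along these paths `enc(P)` and `enc_ι(P)` agree: the end marker
`¬X(true)` holds at the last state of `w` exactly where `X(ι)` holds in `w·ι^ω`, and every
until-target of `enc_ι(P)` demands a node of `K`, so it cannot be met inside the sink.
-/

section SinkExtension

variable {N O : Type}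

attribute [ext] InfPath

theorem InfPath.drop_add_one {S A : Type} (σ : InfPath S A) (k : ℕ) :
    σ.drop (k + 1) = (σ.drop 1).drop k := rfl

theorem InfPath.ext_of_drop_one {S A : Type} {σ τ : InfPath S A} (h0 : σ.state 0 = τ.state 0)
    (ha : σ.act 0 = τ.act 0) (h : σ.drop 1 = τ.drop 1) : σ = τ := by
  refine InfPath.ext (funext fun i => ?_) (funext fun i => ?_)
  · cases i with
    | zero => exact h0
    | succ i => exact congrArg (·.state i) h
  · cases i with
    | zero => exact ha
    | succ i => exact congrArg (·.act i) h

theorem FinPath.drop_zero {S A : Type} (w : FinPath S A) : w.drop 0 = w := by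
  obtain ⟨s, _ | ⟨⟨a, t⟩, r⟩⟩ := w <;> rfl

theorem FinPath.rest_drop {S A : Type} (w : FinPath S A) (k : ℕ) :
    (w.drop k).rest = w.rest.drop k := by
  induction k generalizing w with
  | zero => rw [FinPath.drop_zero, List.drop_zero]
  | succ k ih =>
    obtain ⟨s, _ | ⟨⟨a, t⟩, r⟩⟩ := w
    · rfl
    · exact ih _

theorem appendSink_state_zero (w : FinPath N O) (ops : ℕ → O) :
    (appendSink w ops).state 0 = some w.first := rfl

theorem appendSink_state_eq_none_iff (w : FinPath N O) (ops : ℕ → O) (i : ℕ) :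
    (appendSink w ops).state i = none ↔ w.rest.length < i := by
  simp [appendSink, FinPath.states]

theorem appendSink_cons_act_zero (s t : N) (a : O) (r : List (O × N)) (ops : ℕ → O) :
    (appendSink ⟨s, (a, t) :: r⟩ ops).act 0 = a := by
  simp [appendSink]

theorem appendSink_cons_drop_one (s t : N) (a : O) (r : List (O × N)) (ops : ℕ → O) :
    (appendSink ⟨s, (a, t) :: r⟩ ops).drop 1 = appendSink ⟨t, r⟩ (fun i => ops (i + 1)) := by
  ext i
  · rfl
  · simp [appendSink, InfPath.drop]

theorem appendSink_drop (w : FinPath N O) (ops : ℕ → O) {k : ℕ} (hk : k ≤ w.rest.length) :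
    (appendSink w ops).drop k = appendSink (w.drop k) (fun i => ops (i + k)) := by
  induction k generalizing w ops with
  | zero => rw [FinPath.drop_zero]; rfl
  | succ k ih =>
    obtain ⟨s, _ | ⟨⟨a, t⟩, r⟩⟩ := w
    · simp at hk
    · rw [InfPath.drop_add_one, appendSink_cons_drop_one, ih _ _ (by simpa using hk)]
      rfl

theorem appendSink_drop_state_eq_none (w : FinPath N O) (ops : ℕ → O) {k : ℕ}
    (hk : w.rest.length < k) (i : ℕ) : ((appendSink w ops).drop k).state i = none :=
  (appendSink_state_eq_none_iff w ops _).2 (by omega)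

end SinkExtension

section SinkPaths

variable {N O : Type} (I : IFD N O)

theorem sinkStep_none_right (x : Option N) (op : O) : sinkStep I x op none := by
  cases x <;> trivial

theorem kιPath_iff_drop_one (σ : InfPath (Option N) O) :
    KιPath I σ ↔ sinkStep I (σ.state 0) (σ.act 0) (σ.state 1) ∧ KιPath I (σ.drop 1) :=
  Nat.and_forall_add_one.symm.trans (and_congr_right fun _ => by simp [KιPath, InfPath.drop])

variable {I}

theorem KιPath.state_eq_none_of_le {σ : InfPath (Option N) O} (hσ : KιPath I σ) {i j : ℕ}
    (hi : σ.state i = none) (hij : i ≤ j) : σ.state j = none := by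
  induction j, hij using Nat.le_induction with
  | base => exact hi
  | succ j _ ih =>
    have := hσ j
    rw [ih] at this
    cases h : σ.state (j + 1)
    · rfl
    · rw [h] at this; exact this.elim

theorem kιPath_appendSink {w : FinPath N O} (hw : KTSPath I w) (ops : ℕ → O) :
    KιPath I (appendSink w ops) := by
  obtain ⟨s, r⟩ := w
  induction r generalizing s ops with
  | nil =>
    intro i
    rw [(appendSink_state_eq_none_iff _ _ (i + 1)).2 (by simp)]
    exact sinkStep_none_right I _ _
  | cons p r ih =>
    obtain ⟨a, t⟩ := p
    rw [kιPath_iff_drop_one, appendSink_cons_drop_one]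
    exact ⟨hw.1, ih _ _ hw.2⟩

theorem KιPath.exists_eq_appendSink {σ : InfPath (Option N) O} (hσ : KιPath I σ) {s : N}
    (h0 : σ.state 0 = some s) {m : ℕ} (hm : σ.state m = none) :
    ∃ w, KTSPath I w ∧ σ = appendSink w σ.act := by
  induction m generalizing σ s with
  | zero => simp [h0] at hm
  | succ m ih =>
    obtain ⟨hstep, hσ'⟩ := (kιPath_iff_drop_one I σ).1 hσ
    cases h1 : σ.state 1 with
    | none =>
      refine ⟨⟨s, []⟩, trivial, InfPath.ext (funext fun i => ?_) (funext fun i => ?_)⟩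
      · cases i with
        | zero => exact h0
        | succ i =>
          rw [(appendSink_state_eq_none_iff _ _ _).2 (by simp)]
          exact hσ.state_eq_none_of_le h1 (by omega)
      · simp [appendSink]
    | some t =>
      obtain ⟨w, hw, hσw⟩ := ih hσ' h1 hm
      have hw0 : w.first = t := by
        have h1' : (σ.drop 1).state 0 = some t := h1
        rwa [hσw, appendSink_state_zero, Option.some_inj] at h1'
      refine ⟨⟨s, (σ.act 0, t) :: w.rest⟩, ⟨?_, ?_⟩, ?_⟩
      · rwa [h0, h1] at hstep
      · simpa [KTSPath, hw0] using hw
      · refine InfPath.ext_of_drop_one h0 (appendSink_cons_act_zero ..).symm ?_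
        rw [appendSink_cons_drop_one, hσw, ← hw0]
        rfl

end SinkPaths

section Encodings

variable {N O : Type} (I : IFD N O)

def SinkAgree (φ : LTL (NodePat N) O) (ψ : LTL (SProp N) O) : Prop :=
  ∀ (w : FinPath N O) (ops : ℕ → O),
    FSat (labelOf I) φ w ↔ ISat (labelι I) ψ (appendSink w ops)

def FalseAtSink (ψ : LTL (SProp N) O) : Prop :=
  ∀ σ : InfPath (Option N) O, (∀ i, σ.state i = none) → ¬ ISat (labelι I) ψ σ

variable {I}

theorem inr_mem_labelι_iff {x : Option N} : Sum.inr () ∈ labelι I x ↔ x = none := by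
  cases x <;> simp [labelι]

theorem exists_state_zero_of_isat_and_atom {q : NodePat N} {ψ : LTL (SProp N) O}
    {σ : InfPath (Option N) O} (h : ISat (labelι I) (.and (.atom (.inl q)) ψ) σ) :
    ∃ s, σ.state 0 = some s := by
  obtain ⟨h, -⟩ := h
  cases hs : σ.state 0 with
  | none => simp [ISat, hs, labelι] at h
  | some s => exact ⟨s, rfl⟩

theorem falseAtSink_and_atom (q : NodePat N) (ψ : LTL (SProp N) O) :
    FalseAtSink I (.and (.atom (.inl q)) ψ) := fun σ hσ h => by
  obtain ⟨s, hs⟩ := exists_state_zero_of_isat_and_atom h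
  simp [hσ] at hs

theorem FalseAtSink.untl {ψ : LTL (SProp N) O} (hψ : FalseAtSink I ψ) (φ : LTL (SProp N) O) :
    FalseAtSink I (.untl φ ψ) :=
  fun σ hσ ⟨k, hk, _⟩ => hψ (σ.drop k) (fun i => hσ (i + k)) hk

theorem sinkAgree_atom (q : NodePat N) : SinkAgree I (.atom q) (.atom (.inl q)) := by
  intro w ops
  simp [FSat, ISat, appendSink_state_zero, labelOf, labelι]

theorem fsat_acts_iff_isat {w : FinPath N O} (hw : w.rest ≠ []) (o : Set O) (ops : ℕ → O) :
    FSat (labelOf I) (.acts o) w ↔ ISat (labelι I) (.acts o) (appendSink w ops) := by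
  obtain ⟨s, _ | ⟨⟨a, t⟩, r⟩⟩ := w
  · exact absurd rfl hw
  · simp [FSat, ISat, appendSink_cons_act_zero]

theorem sinkAgree_endMarker (n' : NodePat N) :
    SinkAgree I (.and (.atom n') (.not (.next .tt)))
      (.and (.atom (.inl n')) (.next (.atom (.inr ())))) := by
  intro w ops
  refine and_congr (sinkAgree_atom n' w ops)
    (Iff.trans ?_ (inr_mem_labelι_iff.trans (appendSink_state_eq_none_iff w ops 1)).symm)
  obtain ⟨s, _ | ⟨⟨a, t⟩, r⟩⟩ := w <;> simp [FSat]

theorem SinkAgree.untl_acts {X : LTL (NodePat N) O} {Y : LTL (SProp N) O}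
    (hXY : SinkAgree I X Y) (hY : FalseAtSink I Y) (o : Set O) :
    SinkAgree I (.untl (.acts o) X) (.untl (.acts o) Y) := by
  intro w ops
  have hacts : ∀ j < w.rest.length, (FSat (labelOf I) (.acts o) (w.drop j) ↔
      ISat (labelι I) (.acts o) ((appendSink w ops).drop j)) := fun j hj => by
    rw [appendSink_drop w ops hj.le]
    exact fsat_acts_iff_isat (by simp [FinPath.rest_drop, hj]) o _
  constructor
  · rintro ⟨k, hk, hX, hacts'⟩
    refine ⟨k, ?_, fun j hj => (hacts j (by omega)).1 (hacts' j hj)⟩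
    rw [appendSink_drop w ops hk]
    exact (hXY _ _).1 hX
  · rintro ⟨k, hY', hacts'⟩
    have hk : k ≤ w.rest.length := by
      by_contra! hk
      exact hY _ (appendSink_drop_state_eq_none w ops hk) hY'
    refine ⟨k, hk, ?_, fun j hj => (hacts j (by omega)).2 (hacts' j hj)⟩
    rw [appendSink_drop w ops hk] at hY'
    exact (hXY _ _).2 hY'

-- Every clause of both encodings has the shape `n ∧ o ∧ X(·)`.
theorem SinkAgree.guard {X : LTL (NodePat N) O} {Y : LTL (SProp N) O}
    (hXY : SinkAgree I X Y) (hY : FalseAtSink I Y) (n : NodePat N) (o : Set O) :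
    SinkAgree I (.and (.atom n) (.and (.acts o) (.next X)))
      (.and (.atom (.inl n)) (.and (.acts o) (.next Y))) := by
  rintro ⟨s, _ | ⟨⟨a, t⟩, r⟩⟩ ops
  · refine iff_of_false (fun ⟨_, ⟨_, _, _, h, _⟩, _⟩ => List.cons_ne_nil _ _ h.symm) ?_
    exact fun ⟨_, _, h⟩ => hY _ (appendSink_drop_state_eq_none _ ops (by simp)) h
  · refine and_congr (sinkAgree_atom n _ ops)
      (and_congr (fsat_acts_iff_isat (List.cons_ne_nil _ _) o ops) ?_)
    change _ ↔ ISat (labelι I) Y ((appendSink _ ops).drop 1)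
    rw [appendSink_cons_drop_one, ← hXY]
    simp [FSat]

theorem SinkAgree.or_not {X X' : LTL (NodePat N) O} {Y Y' : LTL (SProp N) O}
    (h : SinkAgree I X Y) (h' : SinkAgree I X' Y') :
    SinkAgree I (.or (.not X) X') (.or (.not Y) Y') :=
  fun w ops => or_congr (not_congr (h w ops)) (h' w ops)

theorem falseAtSink_encι (P : LKind N O) : FalseAtSink I (encι P) := by
  cases P <;> exact falseAtSink_and_atom _ _

theorem sinkAgree_enc (P : LKind N O) : SinkAgree I (encK P) (encι P) := by
  induction P with
  | step n o n' => exact (sinkAgree_endMarker n').guard (falseAtSink_and_atom _ _) n o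
  | plus n o n' =>
    exact ((sinkAgree_endMarker n').untl_acts (falseAtSink_and_atom _ _) o).guard
      ((falseAtSink_and_atom _ _).untl _) n o
  | stepC n o _ P ih => exact ih.guard (falseAtSink_encι P) n o
  | plusC n o _ P ih =>
    exact (ih.untl_acts (falseAtSink_encι P) o).guard ((falseAtSink_encι P).untl _) n o

theorem exists_state_zero_of_isat_encι {P : LKind N O} {σ : InfPath (Option N) O}
    (h : ISat (labelι I) (encι P) σ) : ∃ s, σ.state 0 = some s := by
  cases P <;> exact exists_state_zero_of_isat_and_atom h

theorem exists_state_eq_none_of_isat_encι {P : LKind N O} {σ : InfPath (Option N) O}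
    (h : ISat (labelι I) (encι P) σ) : ∃ m, σ.state m = none := by
  induction P generalizing σ with
  | step => exact ⟨_, inr_mem_labelι_iff.1 h.2.2.2⟩
  | plus =>
    obtain ⟨k, hk, -⟩ := h.2.2
    exact ⟨_, inr_mem_labelι_iff.1 hk.2⟩
  | stepC _ _ _ _ ih =>
    obtain ⟨m, hm⟩ := ih h.2.2
    exact ⟨m + 1, hm⟩
  | plusC _ _ _ _ ih =>
    obtain ⟨k, hk, -⟩ := h.2.2
    obtain ⟨m, hm⟩ := ih hk
    exact ⟨m + k + 1, hm⟩

theorem rest_ne_nil_of_fsat_encK {P : LKind N O} {w : FinPath N O}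
    (h : FSat (labelOf I) (encK P) w) : w.rest ≠ [] := by
  cases P <;>
  · obtain ⟨_, _, _, hr, -⟩ := h.2.1
    simp [hr]

end Encodings

/-- `K ⊨_l ¬enc(P) ∨ enc(P')` over all finite paths of `K` iff
`K_ι ⊨_l ¬enc_ι(P) ∨ enc_ι(P')` over all infinite paths of `K_ι`. -/
theorem constr_fin_iff_sink {N O : Type} (I : IFD N O) (P P' : LKind N O) :
    KModels I (.or (.not (encK P)) (encK P')) ↔
      KιModels I (.or (.not (encι P)) (encι P')) := by
  have hagree := (sinkAgree_enc (I := I) P).or_not (sinkAgree_enc P')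
  constructor
  · intro hK σ hσ
    by_cases hP : ISat (labelι I) (encι P) σ
    · obtain ⟨s, hs⟩ := exists_state_zero_of_isat_encι hP
      obtain ⟨m, hm⟩ := exists_state_eq_none_of_isat_encι hP
      obtain ⟨w, hw, hσw⟩ := hσ.exists_eq_appendSink hs hm
      rw [hσw]
      exact (hagree w _).1 (hK w hw)
    · exact Or.inl hP
  · intro hK w hw
    by_cases hP : FSat (labelOf I) (encK P) w
    · obtain ⟨⟨a, _⟩, _, -⟩ := List.exists_cons_of_ne_nil (rest_ne_nil_of_fsat_encK hP)
      exact (hagree w fun _ => a).2 (hK _ (kιPath_appendSink hw _))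
    · exact Or.inl hP
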